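/- Let U₁ = I, U₂ = diag(1,−1), U₃ = ((0,1),(1,0)), U₄ = ((0,1),(−1,0)) be 2×2 complex matrices, and let Bell_k be the four Bell states of ℂ² ⊗ ℂ². Then for every state φ ∈ ℂ² and every k ∈ {1,2,3,4}, applying U_k to the third qubit of the vector (⟨Bell_k| ⊗ I)(φ ⊗ (|00⟩+|11⟩)/√2) recovers φ/2. That is, U_k ((⟨Bell_k| ⊗ I)(φ ⊗ Bell₁)) = (1/2) φ. -/

import Mathlib

/-!
Read as a `2 × 2` matrix, each Bell state is `Bell_k = U_k / √2`, and `Bell₁` is the identity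
over `√2`. Contracting `φ ⊗ Bell₁` with `⟨Bell_k|` on the first two factors therefore gives
`(1/2) U_kᴴ φ`, and `U_k` undoes this because it is unitary.
-/

noncomputable section

/-- `|ab⟩` as a function `Fin 2 × Fin 2 → ℂ`. -/
def ketf (a b : Fin 2) : Fin 2 × Fin 2 → ℂ := fun p => if p = (a, b) then 1 else 0

/-- The four Bell states of `ℂ² ⊗ ℂ²`, as functions `Fin 2 × Fin 2 → ℂ`. -/
def BellF : Fin 4 → (Fin 2 × Fin 2 → ℂ) :=
  ![((Real.sqrt 2 : ℝ) : ℂ)⁻¹ • (ketf 0 0 + ketf 1 1),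
    ((Real.sqrt 2 : ℝ) : ℂ)⁻¹ • (ketf 0 0 - ketf 1 1),
    ((Real.sqrt 2 : ℝ) : ℂ)⁻¹ • (ketf 0 1 + ketf 1 0),
    ((Real.sqrt 2 : ℝ) : ℂ)⁻¹ • (ketf 0 1 - ketf 1 0)]

/-- The teleportation correction unitaries `U₁ = I`, `U₂ = Z`, `U₃ = X`, `U₄`. -/
def Ucorr : Fin 4 → Matrix (Fin 2) (Fin 2) ℂ :=
  ![1, !![1, 0; 0, -1], !![0, 1; 1, 0], !![0, 1; -1, 0]]

open Matrix

section Contraction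

variable {R n : Type*} [CommRing R] [StarRing R] [Fintype n] [DecidableEq n]

theorem partialContraction_eq_smul_conjTranspose_mulVec (s : R) (U : Matrix n n R) (φ : n → R) :
    (fun c => ∑ a, ∑ b, star (s * U a b) * (φ a * (s * (1 : Matrix n n R) b c)))
      = (star s * s) • (Uᴴ *ᵥ φ) := by
  funext c
  simp only [one_apply, mul_ite, mul_one, mul_zero, Finset.sum_ite_eq', Finset.mem_univ,
    if_true, Pi.smul_apply, smul_eq_mul, mulVec, dotProduct, conjTranspose_apply,
    Finset.mul_sum, star_mul]
  refine Finset.sum_congr rfl fun a _ => ?_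
  ring

end Contraction

theorem BellF_apply (k : Fin 4) (a b : Fin 2) :
    BellF k (a, b) = ((Real.sqrt 2 : ℝ) : ℂ)⁻¹ * Ucorr k a b := by
  fin_cases k <;> fin_cases a <;> fin_cases b <;> simp [BellF, Ucorr, ketf]

theorem Ucorr_mul_conjTranspose (k : Fin 4) : Ucorr k * (Ucorr k)ᴴ = 1 := by
  fin_cases k <;> ext i j <;> fin_cases i <;> fin_cases j <;>
    simp [Ucorr, mul_apply, Fin.sum_univ_two]

theorem star_inv_sqrt_two_mul_self :
    star ((Real.sqrt 2 : ℝ) : ℂ)⁻¹ * ((Real.sqrt 2 : ℝ) : ℂ)⁻¹ = 1 / 2 := by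
  rw [star_inv₀, Complex.star_def, Complex.conj_ofReal, ← mul_inv, ← Complex.ofReal_mul,
    Real.mul_self_sqrt zero_le_two]
  norm_num

/-- Correctness of qubit teleportation: for every state `φ ∈ ℂ²` and every
measurement outcome `k`, applying `U k` to `(⟨Bell_k| ⊗ I)(φ ⊗ Bell₁)` recovers
`(1/2) φ`.  Here `(⟨Bell_k| ⊗ I)(φ ⊗ Bell₁) = fun c => Σ_{a,b} conj (Bell_k (a,b)) ·
φ a · Bell₁ (b,c)`. -/
theorem stmt11 (φ : Fin 2 → ℂ) (k : Fin 4) :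
    (Ucorr k).mulVec
        (fun c => ∑ a : Fin 2, ∑ b : Fin 2,
          (starRingEnd ℂ) (BellF k (a, b)) * (φ a * BellF 0 (b, c)))
      = (1 / 2 : ℂ) • φ := by
  have hUcorr_zero : Ucorr 0 = 1 := rfl
  simp only [BellF_apply, hUcorr_zero, starRingEnd_apply]
  rw [partialContraction_eq_smul_conjTranspose_mulVec, star_inv_sqrt_two_mul_self, mulVec_smul, mulVec_mulVec,
    Ucorr_mul_conjTranspose, one_mulVec]

end
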